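/- arXiv:1707.02875 — 7 statements merged into one kernel-verified Lean document; each statement's English description precedes it below -/
import Mathlib

section
/- Let K be the attractor of a finite system S = {S_1, ..., S_m} of contraction maps on a complete metric space X. If for any indices i, j there is a chain i_0 = i, i_1, ..., i_n = j such that S_{i_k}(K) ∩ S_{i_{k+1}}(K) ≠ ∅ for all k, then K is connected. -/
/-!
Call `K` `ε`-chain connected if any two of its points are joined by a finite chain of points of
`K` with consecutive distances at most `ε`. A compact set that is `ε`-chain connected for every
`ε > 0` is connected, since two disjoint closed pieces of it lie at positive distance.

If `K` is `ε`-chain connected, then each piece `Sᵢ(K)` is `rε`-chain connected, `r < 1` being a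
common Lipschitz constant; as overlapping pieces can be concatenated along the chain of indices,
`K` itself is `rε`-chain connected. Starting from `ε = diam K` and iterating gives every `ε > 0`.
-/

open Relation Metric Set Filter Topology

section EpsChain

variable {X : Type*} [MetricSpace X]

def EpsChain (K : Set X) (ε : ℝ) : X → X → Prop :=
  ReflTransGen fun a b => a ∈ K ∧ b ∈ K ∧ dist a b ≤ ε

def EpsChainConnected (K : Set X) (ε : ℝ) : Prop :=
  ∀ x ∈ K, ∀ y ∈ K, EpsChain K ε x y

variable {K : Set X} {ε : ℝ}

theorem EpsChain.mono {ε' : ℝ} (h : ε ≤ ε') {x y : X} (hxy : EpsChain K ε x y) :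
    EpsChain K ε' x y :=
  ReflTransGen.mono (fun _ _ ⟨ha, hb, hd⟩ => ⟨ha, hb, hd.trans h⟩) _ _ hxy

theorem EpsChainConnected.mono {ε' : ℝ} (h : ε ≤ ε') (hK : EpsChainConnected K ε) :
    EpsChainConnected K ε' :=
  fun x hx y hy => (hK x hx y hy).mono h

theorem EpsChain.image {f : X → X} {r : NNReal} (hf : LipschitzWith r f) (hfK : MapsTo f K K)
    {x y : X} (hxy : EpsChain K ε x y) : EpsChain K (r * ε) (f x) (f y) :=
  ReflTransGen.lift f (fun _ _ ⟨ha, hb, hd⟩ => ⟨hfK ha, hfK hb,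
    (hf.dist_le_mul _ _).trans (mul_le_mul_of_nonneg_left hd r.coe_nonneg)⟩) _ _ hxy

theorem EpsChain.mem_of_lt_dist {u v : Set X} (hKuv : K ⊆ u ∪ v)
    (hsep : ∀ a ∈ K ∩ u, ∀ b ∈ v, ε < dist a b) {x y : X} (hxy : EpsChain K ε x y)
    (hx : x ∈ u) : y ∈ u := by
  induction hxy with
  | refl => exact hx
  | tail _ hbc ih =>
    obtain ⟨hb, hc, hd⟩ := hbc
    exact (hKuv hc).resolve_right fun hcv => (hsep _ ⟨hb, ih⟩ _ hcv).not_ge hd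

theorem IsCompact.isPreconnected_of_forall_epsChainConnected (hK : IsCompact K)
    (h : ∀ ε > 0, EpsChainConnected K ε) : IsPreconnected K := by
  rw [isPreconnected_iff_subset_of_fully_disjoint_closed hK.isClosed]
  intro u v hu hv hKuv huv
  obtain ⟨δ, hδ, hsep⟩ := Metric.exists_pos_forall_lt_edist (hK.inter_right hu) hv
    (huv.mono_left inter_subset_right)
  have hsep' : ∀ a ∈ K ∩ u, ∀ b ∈ v, (δ : ℝ) < dist a b := fun a ha b hb => by
    have := hsep a ha b hb
    rwa [edist_nndist, ENNReal.coe_lt_coe, ← NNReal.coe_lt_coe, coe_nndist] at this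
  rcases (K ∩ u).eq_empty_or_nonempty with hKu | ⟨x, hxK, hxu⟩
  · exact Or.inr fun y hy => (hKuv hy).resolve_left fun hyu => hKu.subset ⟨hy, hyu⟩
  · exact Or.inl fun y hy => (h δ hδ x hxK y hy).mem_of_lt_dist hKuv hsep' hxu

end EpsChain

theorem Relation.ReflTransGen.of_reflTransGen_inter {X ι : Type*} {r : X → X → Prop}
    {s : ι → Set X} (hs : ∀ i, ∀ a ∈ s i, ∀ b ∈ s i, ReflTransGen r a b) {i j : ι}
    (hij : ReflTransGen (fun i j => (s i ∩ s j).Nonempty) i j) {a b : X} (ha : a ∈ s i)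
    (hb : b ∈ s j) : ReflTransGen r a b := by
  induction hij generalizing b with
  | refl => exact hs i a ha b hb
  | tail _ hkl ih =>
    obtain ⟨z, hzk, hzl⟩ := hkl
    exact (ih hzk).trans (hs _ z hzl b hb)

theorem exists_lipschitzWith_lt_one_of_finite {X ι : Type*} [PseudoEMetricSpace X] [Fintype ι]
    {S : ι → X → X} (hS : ∀ i, ∃ r : NNReal, r < 1 ∧ LipschitzWith r (S i)) :
    ∃ r : NNReal, r < 1 ∧ ∀ i, LipschitzWith r (S i) := by
  choose r hr1 hr using hS
  exact ⟨Finset.univ.sup r, Finset.sup_lt_iff zero_lt_one |>.2 fun i _ => hr1 i,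
    fun i => (hr i).weaken (Finset.le_sup (Finset.mem_univ i))⟩

section Attractor

variable {X ι : Type*} [MetricSpace X] {S : ι → X → X} {r : NNReal} {K : Set X}

theorem EpsChainConnected.mul_of_eq_iUnion_image (hS : ∀ i, LipschitzWith r (S i))
    (hKinv : K = ⋃ i, S i '' K)
    (hchain : ∀ i j, ReflTransGen (fun i j => (S i '' K ∩ S j '' K).Nonempty) i j) {ε : ℝ}
    (hK : EpsChainConnected K ε) : EpsChainConnected K (r * ε) := by
  have hmaps : ∀ i, MapsTo (S i) K K := fun i x hx => by
    rw [hKinv]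
    exact mem_iUnion_of_mem i (mem_image_of_mem _ hx)
  have hpiece : ∀ i, ∀ a ∈ S i '' K, ∀ b ∈ S i '' K, EpsChain K (r * ε) a b := by
    rintro i _ ⟨a, ha, rfl⟩ _ ⟨b, hb, rfl⟩
    exact (hK a ha b hb).image (hS i) (hmaps i)
  intro x hx y hy
  rw [hKinv, mem_iUnion] at hx hy
  obtain ⟨i, hxi⟩ := hx
  obtain ⟨j, hyj⟩ := hy
  exact (hchain i j).of_reflTransGen_inter hpiece hxi hyj

theorem epsChainConnected_pow_mul_diam (hS : ∀ i, LipschitzWith r (S i))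
    (hKinv : K = ⋃ i, S i '' K)
    (hchain : ∀ i j, ReflTransGen (fun i j => (S i '' K ∩ S j '' K).Nonempty) i j)
    (hK : Bornology.IsBounded K) (n : ℕ) : EpsChainConnected K (r ^ n * diam K) := by
  induction n with
  | zero =>
    rw [pow_zero, one_mul]
    exact fun x hx y hy => ReflTransGen.single ⟨hx, hy, dist_le_diam_of_mem hK hx hy⟩
  | succ n ih =>
    rw [pow_succ', mul_assoc]
    exact ih.mul_of_eq_iUnion_image hS hKinv hchain

end Attractor

theorem stmt_0_general {X : Type*} [MetricSpace X] {m : ℕ}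
    (S : Fin m → X → X)
    (hS : ∀ i, ∃ r : NNReal, r < 1 ∧ LipschitzWith r (S i))
    (K : Set X) (hKne : K.Nonempty) (hKc : IsCompact K)
    (hKinv : K = ⋃ i, S i '' K)
    (hchain : ∀ i j : Fin m, ∃ (n : ℕ) (c : ℕ → Fin m), c 0 = i ∧ c n = j ∧
      ∀ k < n, (S (c k) '' K ∩ S (c (k + 1)) '' K).Nonempty) :
    IsConnected K := by
  obtain ⟨r, hr1, hS⟩ := exists_lipschitzWith_lt_one_of_finite hS
  have hpieces : ∀ i j, ReflTransGen (fun i j => (S i '' K ∩ S j '' K).Nonempty) i j := by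
    intro i j
    obtain ⟨n, c, rfl, rfl, hc⟩ := hchain i j
    exact (reflTransGen_of_succ_of_le (fun k l => (S (c k) '' K ∩ S (c l) '' K).Nonempty)
      (fun k hk => hc k hk.2) n.zero_le).lift c fun _ _ h => h
  refine ⟨hKne, hKc.isPreconnected_of_forall_epsChainConnected fun ε hε => ?_⟩
  have hsmall : Tendsto (fun n => (r : ℝ) ^ n * diam K) atTop (𝓝 0) := by
    simpa using (tendsto_pow_atTop_nhds_zero_of_lt_one r.coe_nonneg hr1).mul_const (diam K)
  obtain ⟨n, hn⟩ := (hsmall.eventually (gt_mem_nhds hε)).exists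
  exact (epsChainConnected_pow_mul_diam hS hKinv hpieces hKc.isBounded n).mono hn.le

/-- If the intersection graph of the pieces `Sᵢ(K)` of the attractor `K` is
chain-connected, then `K` is connected. -/
theorem stmt_0 {X : Type*} [MetricSpace X] [CompleteSpace X] {m : ℕ}
    (S : Fin m → X → X)
    (hS : ∀ i, ∃ r : NNReal, r < 1 ∧ LipschitzWith r (S i))
    (K : Set X) (hKne : K.Nonempty) (hKc : IsCompact K)
    (hKinv : K = ⋃ i, S i '' K)
    (hchain : ∀ i j : Fin m, ∃ (n : ℕ) (c : ℕ → Fin m), c 0 = i ∧ c n = j ∧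
      ∀ k < n, (S (c k) '' K ∩ S (c (k + 1)) '' K).Nonempty) :
    IsConnected K :=
  stmt_0_general S hS K hKne hKc hKinv hchain
end

section
/- Let K be the attractor of a finite system of contractions on a complete metric space. If K is connected, then for any i, j there exists a chain of indices i_0 = i, ..., i_n = j with S_{i_k}(K) ∩ S_{i_{k+1}}(K) ≠ ∅ for each consecutive pair. -/
/-!
The pieces `S i '' K` are finitely many compact, hence closed, sets covering `K`. The union of
the pieces reachable from `i` through intersecting pieces and the union of all other pieces are
then two closed sets covering `K` which can only meet where some reachable piece meets an
unreachable one; connectedness of `K` forces every piece to be reachable.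
-/

open Relation

theorem Relation.ReflTransGen.exists_nat_chain {α : Type*} {r : α → α → Prop} {a b : α}
    (h : ReflTransGen r a b) :
    ∃ (n : ℕ) (c : ℕ → α), c 0 = a ∧ c n = b ∧ ∀ k < n, r (c k) (c (k + 1)) := by
  induction h with
  | refl => exact ⟨0, fun _ => a, rfl, rfl, fun k hk => absurd hk (Nat.not_lt_zero k)⟩
  | @tail b d _ hbd ih =>
    obtain ⟨n, c, hc0, hcn, hc⟩ := ih
    refine ⟨n + 1, fun k => if k ≤ n then c k else d, by simp [hc0], by simp, ?_⟩
    intro k hk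
    rcases Nat.lt_or_eq_of_le (Nat.le_of_lt_succ hk) with hkn | rfl
    · simpa [hkn.le, Nat.succ_le_of_lt hkn] using hc k hkn
    · simpa [hcn] using hbd

theorem IsPreconnected.reflTransGen_inter_nonempty {X ι : Type*} [TopologicalSpace X] [Finite ι]
    {A : ι → Set X} (hconn : IsPreconnected (⋃ a, A a)) (hA : ∀ a, IsClosed (A a))
    (hne : ∀ a, (A a).Nonempty) (i j : ι) :
    ReflTransGen (fun a b => (A a ∩ A b).Nonempty) i j := by
  by_contra hj
  set P := {a | ReflTransGen (fun a b => (A a ∩ A b).Nonempty) i a}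
  have hcover : ⋃ a, A a ⊆ (⋃ a ∈ P, A a) ∪ ⋃ a ∈ Pᶜ, A a := by
    refine Set.iUnion_subset fun a x hx => ?_
    by_cases ha : a ∈ P
    · exact Or.inl (Set.mem_biUnion ha hx)
    · exact Or.inr (Set.mem_biUnion ha hx)
  obtain ⟨x, -, hxP, hxPc⟩ := isPreconnected_closed_iff.mp hconn _ _
    ((Set.toFinite P).isClosed_biUnion fun a _ => hA a)
    ((Set.toFinite Pᶜ).isClosed_biUnion fun a _ => hA a) hcover
    ((hne i).mono fun x hx => ⟨Set.mem_iUnion_of_mem i hx, Set.mem_biUnion ReflTransGen.refl hx⟩)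
    ((hne j).mono fun x hx => ⟨Set.mem_iUnion_of_mem j hx, Set.mem_biUnion hj hx⟩)
  obtain ⟨a, ha, hxa⟩ := Set.mem_iUnion₂.mp hxP
  obtain ⟨b, hb, hxb⟩ := Set.mem_iUnion₂.mp hxPc
  exact hb (ha.tail ⟨x, hxa, hxb⟩)

theorem stmt_1_general {X : Type*} [MetricSpace X] {m : ℕ}
    (S : Fin m → X → X)
    (hS : ∀ i, ∃ r : NNReal, r < 1 ∧ LipschitzWith r (S i))
    (K : Set X) (hKne : K.Nonempty) (hKc : IsCompact K)
    (hKinv : K = ⋃ i, S i '' K)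
    (hconn : IsConnected K) :
    ∀ i j : Fin m, ∃ (n : ℕ) (c : ℕ → Fin m), c 0 = i ∧ c n = j ∧
      ∀ k < n, (S (c k) '' K ∩ S (c (k + 1)) '' K).Nonempty := by
  have hclosed : ∀ a, IsClosed (S a '' K) := fun a => by
    obtain ⟨r, -, hr⟩ := hS a
    exact (hKc.image hr.continuous).isClosed
  have hpre : IsPreconnected (⋃ a, S a '' K) := hKinv ▸ hconn.isPreconnected
  intro i j
  exact (hpre.reflTransGen_inter_nonempty hclosed (fun a => hKne.image _) i j).exists_nat_chain

/-- If the attractor `K` of a finite system of contractions is connected, then any two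
pieces are joined by a chain of pieces with nonempty consecutive intersections. -/
theorem stmt_1 {X : Type*} [MetricSpace X] [CompleteSpace X] {m : ℕ}
    (S : Fin m → X → X)
    (hS : ∀ i, ∃ r : NNReal, r < 1 ∧ LipschitzWith r (S i))
    (K : Set X) (hKne : K.Nonempty) (hKc : IsCompact K)
    (hKinv : K = ⋃ i, S i '' K)
    (hconn : IsConnected K) :
    ∀ i j : Fin m, ∃ (n : ℕ) (c : ℕ → Fin m), c 0 = i ∧ c n = j ∧
      ∀ k < n, (S (c k) '' K ∩ S (c (k + 1)) '' K).Nonempty :=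
  stmt_1_general S hS K hKne hKc hKinv hconn
end

section
/- A connected self-similar set (attractor of a finite system of contractions on a complete metric space) is locally connected. -/
open Set Filter Topology
open scoped ENNReal NNReal

/-- Sierpiński property S implies local connectedness. -/
lemma propS_locallyConnected {Y : Type*} [MetricSpace Y]
    (h : ∀ ε : ℝ≥0∞, 0 < ε → ∃ (ι : Type) (_ : Fintype ι) (c : ι → Set Y),
      (∀ i, IsPreconnected (c i)) ∧ (∀ i, EMetric.diam (c i) ≤ ε) ∧ (⋃ i, c i) = Set.univ) :
    LocallyConnectedSpace Y := by
  rw [locallyConnectedSpace_iff_connected_subsets]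
  intro x U hU
  obtain ⟨ε, hε, hball⟩ := Metric.mem_nhds_iff.mp hU
  obtain ⟨ι, _, c, hc1, hc2, hc3⟩ := h (ENNReal.ofReal (ε / 2)) (by positivity)
  set T : Set ι := {i | x ∈ closure (c i)} with hT
  refine ⟨⋃ i ∈ T, closure (c i), ?_, ?_, ?_⟩
  · -- neighborhood
    have hFc : IsClosed (⋃ i ∈ Tᶜ, closure (c i)) :=
      (Set.toFinite Tᶜ).isClosed_biUnion fun i _ => isClosed_closure
    have hxF : x ∉ ⋃ i ∈ Tᶜ, closure (c i) := by
      intro hx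
      obtain ⟨i, hi, hxi⟩ := Set.mem_iUnion₂.mp hx
      exact hi hxi
    refine Filter.mem_of_superset (hFc.isOpen_compl.mem_nhds hxF) ?_
    intro y hy
    have : y ∈ ⋃ i, c i := hc3 ▸ Set.mem_univ y
    obtain ⟨i, hi⟩ := Set.mem_iUnion.mp this
    by_cases hiT : i ∈ T
    · exact Set.mem_biUnion hiT (subset_closure hi)
    · exact absurd (Set.mem_biUnion (Set.mem_compl hiT) (subset_closure hi)) hy
  · -- preconnected
    rw [← Set.sUnion_image]
    refine isPreconnected_sUnion x _ ?_ ?_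
    · rintro s ⟨i, hi, rfl⟩; exact hi
    · rintro s ⟨i, _, rfl⟩; exact (hc1 i).closure
  · -- subset of U
    intro y hy
    obtain ⟨i, hi, hyi⟩ := Set.mem_iUnion₂.mp hy
    have hd : edist x y ≤ ENNReal.ofReal (ε / 2) := by
      calc edist x y ≤ EMetric.diam (closure (c i)) := EMetric.edist_le_diam_of_mem hi hyi
        _ = EMetric.diam (c i) := EMetric.diam_closure _
        _ ≤ _ := hc2 i
    apply hball
    have : dist x y ≤ ε / 2 := by
      rw [edist_dist] at hd
      exact (ENNReal.ofReal_le_ofReal_iff (by positivity)).mp hd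
    simp only [Metric.mem_ball, dist_comm]
    linarith

/-- Iterated decomposition of the attractor into small connected pieces. -/
lemma attractor_pieces {X : Type*} [MetricSpace X] {m : ℕ}
    (S : Fin m → X → X) {ρ : ℝ≥0} (hS : ∀ i, LipschitzWith ρ (S i))
    (K : Set X) (hKinv : K = ⋃ i, S i '' K) (hconn : IsPreconnected K) (n : ℕ) :
    ∃ (ι : Type) (_ : Fintype ι) (c : ι → Set X),
      (∀ i, IsPreconnected (c i)) ∧
      (∀ i, EMetric.diam (c i) ≤ (ρ : ℝ≥0∞) ^ n * EMetric.diam K) ∧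
      (⋃ i, c i) = K := by
  induction n with
  | zero =>
    exact ⟨Unit, inferInstance, fun _ => K, fun _ => hconn,
      fun _ => by simp, Set.iUnion_const K⟩
  | succ n ih =>
    obtain ⟨ι, _, c, hc1, hc2, hc3⟩ := ih
    refine ⟨Fin m × ι, inferInstance, fun p => S p.1 '' c p.2, ?_, ?_, ?_⟩
    · exact fun p => (hc1 p.2).image _ (hS p.1).continuous.continuousOn
    · intro p
      calc EMetric.diam (S p.1 '' c p.2) ≤ (ρ : ℝ≥0∞) * EMetric.diam (c p.2) :=
            (hS p.1).ediam_image_le _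
        _ ≤ (ρ : ℝ≥0∞) * ((ρ : ℝ≥0∞) ^ n * EMetric.diam K) :=
            mul_le_mul_right (hc2 p.2) _
        _ = (ρ : ℝ≥0∞) ^ (n + 1) * EMetric.diam K := by ring
    · calc (⋃ p : Fin m × ι, S p.1 '' c p.2) = ⋃ j, ⋃ i, S j '' c i := by
            rw [Set.iUnion_prod']
        _ = ⋃ j, S j '' K := by simp_rw [← Set.image_iUnion, hc3]
        _ = K := hKinv.symm

/-- A connected self-similar set (attractor of a finite system of contractions on a
complete metric space) is locally connected. -/
theorem stmt_2 {X : Type*} [MetricSpace X] [CompleteSpace X] {m : ℕ}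
    (S : Fin m → X → X)
    (hS : ∀ i, ∃ r : NNReal, r < 1 ∧ LipschitzWith r (S i))
    (K : Set X) (hKne : K.Nonempty) (hKc : IsCompact K)
    (hKinv : K = ⋃ i, S i '' K)
    (hconn : IsConnected K) :
    LocallyConnectedSpace K := by
  -- choose a uniform contraction ratio
  choose r hr1 hrL using hS
  set ρ : ℝ≥0 := Finset.univ.sup r with hρ
  have hρ1 : ρ < 1 := by
    rcases (Finset.univ : Finset (Fin m)).eq_empty_or_nonempty with h | h
    · simp [hρ, h]
    · exact (Finset.sup_lt_iff (by norm_num)).mpr fun i _ => hr1 i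
  have hSL : ∀ i, LipschitzWith ρ (S i) :=
    fun i => (hrL i).weaken (Finset.le_sup (Finset.mem_univ i))
  have hdK : EMetric.diam K ≠ ⊤ := hKc.isBounded.ediam_ne_top
  -- property S for the subtype
  apply propS_locallyConnected
  intro ε hε
  -- choose n with ρ^n * diam K < ε
  have htend : Filter.Tendsto (fun n : ℕ => (ρ : ℝ≥0∞) ^ n * EMetric.diam K)
      Filter.atTop (nhds 0) := by
    have h0 : (0 : ℝ≥0∞) * EMetric.diam K = 0 := by simp
    have hlt : (ρ : ℝ≥0∞) < 1 := by exact_mod_cast hρ1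
    simpa [h0] using ENNReal.Tendsto.mul_const
      (ENNReal.tendsto_pow_atTop_nhds_zero_of_lt_one hlt) (Or.inr hdK)
  obtain ⟨n, hn⟩ := (htend.eventually (gt_mem_nhds hε)).exists
  obtain ⟨ι, _, c, hc1, hc2, hc3⟩ :=
    attractor_pieces S hSL K hKinv hconn.isPreconnected n
  refine ⟨ι, inferInstance, fun i => Subtype.val ⁻¹' c i, ?_, ?_, ?_⟩
  · intro i
    have hsub : c i ⊆ K := hc3 ▸ Set.subset_iUnion c i
    have himg : Subtype.val '' (Subtype.val ⁻¹' c i : Set K) = c i := by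
      rw [Set.image_preimage_eq_inter_range, Subtype.range_coe,
        Set.inter_eq_left.mpr hsub]
    exact Topology.IsInducing.subtypeVal.isPreconnected_image.mp (himg ▸ hc1 i)
  · intro i
    calc EMetric.diam (Subtype.val ⁻¹' c i : Set K)
        = EMetric.diam (Subtype.val '' (Subtype.val ⁻¹' c i : Set K)) :=
          (isometry_subtype_coe.ediam_image _).symm
      _ ≤ EMetric.diam (c i) := EMetric.diam_mono (Set.image_preimage_subset _ _)
      _ ≤ ε := le_trans (hc2 i) hn.le
  · rw [← Set.preimage_iUnion, hc3]
    exact Set.eq_univ_of_forall fun x => x.2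
end

section
/- Let S be a P-polyhedral system with polyhedra P_j = S_j(P) for multiindices j ∈ I*. Then for multiindices i, j: P_j ⊆ P_i if and only if i is an initial segment of j (i ⊑ j). -/
open Set

/-- `S` is a `P`-polyhedral system with vertex set `V`: the maps are contraction
similarities, each `Pᵢ = Sᵢ(P)` lies in `P`, distinct `Pᵢ, Pⱼ` meet in at most one
point which is then a common vertex, and every vertex of `P` is a vertex of some
`Pᵢ`. -/
def IsPPolyhedralSystem {d : ℕ} {ι : Type*} (P : Set (EuclideanSpace ℝ (Fin d)))
    (V : Finset (EuclideanSpace ℝ (Fin d)))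
    (S : ι → EuclideanSpace ℝ (Fin d) → EuclideanSpace ℝ (Fin d)) : Prop :=
  (∀ i, ∃ r ∈ Set.Ioo (0 : ℝ) 1, ∀ x y, dist (S i x) (S i y) = r * dist x y) ∧
  (∀ i, S i '' P ⊆ P) ∧
  (∀ i j, i ≠ j → (S i '' P ∩ S j '' P = ∅ ∨
    ∃ v, S i '' P ∩ S j '' P = {v} ∧ v ∈ S i '' (V : Set (EuclideanSpace ℝ (Fin d))) ∧
      v ∈ S j '' (V : Set (EuclideanSpace ℝ (Fin d))))) ∧
  ((V : Set (EuclideanSpace ℝ (Fin d))) ⊆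
    ⋃ i, S i '' (V : Set (EuclideanSpace ℝ (Fin d))))

/-- The polyhedron data: `P` is a compact set homeomorphic to the closed `d`-ball, with
finite vertex set `V ⊆ P`. -/
def IsPolyhedronWithVertices {d : ℕ} (P : Set (EuclideanSpace ℝ (Fin d)))
    (V : Finset (EuclideanSpace ℝ (Fin d))) : Prop :=
  IsCompact P ∧ (V : Set (EuclideanSpace ℝ (Fin d))) ⊆ P ∧
    Nonempty (P ≃ₜ Metric.closedBall (0 : EuclideanSpace ℝ (Fin d)) 1)

/-- The composition `S_{j₁} ∘ ⋯ ∘ S_{jₙ}` associated to a multiindex `j`. -/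
def Sw {d : ℕ} {ι : Type*} (S : ι → EuclideanSpace ℝ (Fin d) → EuclideanSpace ℝ (Fin d)) :
    List ι → EuclideanSpace ℝ (Fin d) → EuclideanSpace ℝ (Fin d) :=
  fun l => l.foldr (fun i f => S i ∘ f) id

open Function

/-!
A cylinder `P_j` is the image of the nontrivial set `P` under the injective map `S_j`, and
`P_{a i} ⊆ P_a`. If `P_{b j} ⊆ P_{a i}` with `a ≠ b`, then `P_{b j}` would lie in the at most
one-point set `P_a ∩ P_b`; and `P ⊆ P_{a i}` would give `P ⊆ S_a(P)`, impossible for a contraction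
of a bounded set of positive diameter. Hence `i` and `j` agree letter by letter, and cancelling the
injective first map reduces the inclusion to the shorter words.
-/

theorem Set.Nontrivial.not_subset_image_of_lipschitzWith {X : Type*} [MetricSpace X]
    {f : X → X} {K : NNReal} {s : Set X} (hs : s.Nontrivial) (hb : Bornology.IsBounded s)
    (hf : LipschitzWith K f) (hK : K < 1) : ¬ s ⊆ f '' s := by
  intro h
  have hdiam : Metric.diam s ≤ K * Metric.diam s :=
    (Metric.diam_mono h (hf.isBounded_image hb)).trans (hf.diam_image_le s hb)
  have hpos := Metric.diam_pos hs hb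
  have hK' : (K : ℝ) < 1 := hK
  nlinarith

section Sw

variable {d : ℕ} {ι : Type*} (S : ι → EuclideanSpace ℝ (Fin d) → EuclideanSpace ℝ (Fin d))

theorem sw_cons (a : ι) (l : List ι) : Sw S (a :: l) = S a ∘ Sw S l := rfl

theorem sw_append (l₁ l₂ : List ι) : Sw S (l₁ ++ l₂) = Sw S l₁ ∘ Sw S l₂ := by
  induction l₁ with
  | nil => rfl
  | cons a l ih => rw [List.cons_append, sw_cons, sw_cons, ih, comp_assoc]

theorem sw_injective (hS : ∀ a, Injective (S a)) (l : List ι) : Injective (Sw S l) := by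
  induction l with
  | nil => exact injective_id
  | cons a l ih => exact (hS a).comp ih

variable {S} {P : Set (EuclideanSpace ℝ (Fin d))}

theorem image_sw_subset (hsub : ∀ a, S a '' P ⊆ P) (l : List ι) : Sw S l '' P ⊆ P := by
  induction l with
  | nil => exact (image_id P).subset
  | cons a l ih =>
    rw [sw_cons, image_comp]
    exact (image_mono ih).trans (hsub a)

theorem image_sw_cons_subset (hsub : ∀ a, S a '' P ⊆ P) (a : ι) (l : List ι) :
    Sw S (a :: l) '' P ⊆ S a '' P := by
  rw [sw_cons, image_comp]
  exact image_mono (image_sw_subset hsub l)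

theorem image_sw_subset_of_prefix (hsub : ∀ a, S a '' P ⊆ P) {i j : List ι} (h : i <+: j) :
    Sw S j '' P ⊆ Sw S i '' P := by
  obtain ⟨k, rfl⟩ := h
  rw [sw_append, image_comp]
  exact image_mono (image_sw_subset hsub k)

theorem prefix_of_image_sw_subset (hP : P.Nontrivial) (hinj : ∀ a, Injective (S a))
    (hsub : ∀ a, S a '' P ⊆ P) (hproper : ∀ a, ¬ P ⊆ S a '' P)
    (hsep : Pairwise fun a b => (S a '' P ∩ S b '' P).Subsingleton) :
    ∀ {i j : List ι}, Sw S j '' P ⊆ Sw S i '' P → i <+: j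
  | [], _, _ => List.nil_prefix
  | a :: i, [], h =>
    (hproper a ((image_id P).superset.trans (h.trans (image_sw_cons_subset hsub a i)))).elim
  | a :: i, b :: j, h => by
    obtain rfl | hab := eq_or_ne a b
    · rw [sw_cons, sw_cons, image_comp, image_comp, image_subset_image_iff (hinj a)] at h
      exact List.cons_prefix_cons.mpr ⟨rfl, prefix_of_image_sw_subset hP hinj hsub hproper hsep h⟩
    · have hinter : Sw S (b :: j) '' P ⊆ S a '' P ∩ S b '' P :=
        subset_inter (h.trans (image_sw_cons_subset hsub a i)) (image_sw_cons_subset hsub b j)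
      exact ((hP.image (sw_injective S hinj _)).mono hinter).not_subsingleton (hsep hab) |>.elim

theorem image_sw_subset_image_sw_iff_prefix (hP : P.Nontrivial) (hinj : ∀ a, Injective (S a))
    (hsub : ∀ a, S a '' P ⊆ P) (hproper : ∀ a, ¬ P ⊆ S a '' P)
    (hsep : Pairwise fun a b => (S a '' P ∩ S b '' P).Subsingleton) (i j : List ι) :
    Sw S j '' P ⊆ Sw S i '' P ↔ i <+: j :=
  ⟨prefix_of_image_sw_subset hP hinj hsub hproper hsep, image_sw_subset_of_prefix hsub⟩

end Sw

section PolyhedralSystem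

variable {d : ℕ} {ι : Type*} {P : Set (EuclideanSpace ℝ (Fin d))}
  {V : Finset (EuclideanSpace ℝ (Fin d))}
  {S : ι → EuclideanSpace ℝ (Fin d) → EuclideanSpace ℝ (Fin d)}

theorem IsPolyhedronWithVertices.nontrivial (hd : 0 < d) (hP : IsPolyhedronWithVertices P V) :
    P.Nontrivial := by
  obtain ⟨e⟩ := hP.2.2
  have : Nonempty (Fin d) := ⟨⟨0, hd⟩⟩
  obtain ⟨v, hv⟩ := (NormedSpace.sphere_nonempty (x := (0 : EuclideanSpace ℝ (Fin d)))).mpr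
    zero_le_one
  have hball : (Metric.closedBall (0 : EuclideanSpace ℝ (Fin d)) 1).Nontrivial :=
    ⟨0, Metric.mem_closedBall_self zero_le_one, v, Metric.sphere_subset_closedBall hv,
      (Metric.ne_of_mem_sphere hv one_ne_zero).symm⟩
  have := nontrivial_coe_sort.mpr hball
  exact nontrivial_coe_sort.mp e.symm.injective.nontrivial

theorem IsPPolyhedralSystem.injective (hS : IsPPolyhedralSystem P V S) (a : ι) :
    Injective (S a) := by
  obtain ⟨r, ⟨hr, -⟩, hdist⟩ := hS.1 a
  intro x y hxy
  have : r * dist x y = 0 := by rw [← hdist, hxy, dist_self]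
  exact dist_eq_zero.mp ((mul_eq_zero.mp this).resolve_left hr.ne')

theorem IsPPolyhedralSystem.exists_lipschitzWith_lt_one (hS : IsPPolyhedralSystem P V S)
    (a : ι) : ∃ K < 1, LipschitzWith K (S a) := by
  obtain ⟨r, ⟨hr, hr1⟩, hdist⟩ := hS.1 a
  exact ⟨⟨r, hr.le⟩, hr1, LipschitzWith.of_dist_le_mul fun x y => (hdist x y).le⟩

theorem IsPPolyhedralSystem.subsingleton_inter (hS : IsPPolyhedralSystem P V S) :
    Pairwise fun a b => (S a '' P ∩ S b '' P).Subsingleton := by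
  intro a b hab
  rcases hS.2.2.1 a b hab with h | ⟨v, h, -⟩ <;> rw [h]
  exacts [subsingleton_empty, subsingleton_singleton]

end PolyhedralSystem

/-- For a `P`-polyhedral system (with `d ≥ 1`), `P_j ⊆ P_i` iff `i` is an initial
segment of `j`. -/
theorem stmt_7 {d m : ℕ} (hd : 0 < d) (P : Set (EuclideanSpace ℝ (Fin d)))
    (V : Finset (EuclideanSpace ℝ (Fin d)))
    (S : Fin m → EuclideanSpace ℝ (Fin d) → EuclideanSpace ℝ (Fin d))
    (hP : IsPolyhedronWithVertices P V)
    (hS : IsPPolyhedralSystem P V S)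
    (i j : List (Fin m)) :
    Sw S j '' P ⊆ Sw S i '' P ↔ i <+: j := by
  have hPnt := hP.nontrivial hd
  have hproper : ∀ a, ¬ P ⊆ S a '' P := fun a => by
    obtain ⟨K, hK, hlip⟩ := hS.exists_lipschitzWith_lt_one a
    exact hPnt.not_subset_image_of_lipschitzWith hP.1.isBounded hlip hK
  exact image_sw_subset_image_sw_iff_prefix hPnt hS.injective hS.2.1 hproper
    hS.subsingleton_inter i j
end

section
/- Let S be a P-polyhedral system. For any i ∈ I, if x ∈ P, S_i(x) ∈ V_P, then x ∈ V_P; equivalently, P_i ∩ V_P ⊆ S_i(V_P). -/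
open Set

/-- For a `P`-polyhedral system: if `x ∈ P` and `Sᵢ(x)` is a vertex of `P`, then `x` is
a vertex of `P`; equivalently `Pᵢ ∩ V_P ⊆ Sᵢ(V_P)`. -/
theorem stmt_8 {d m : ℕ} (P : Set (EuclideanSpace ℝ (Fin d)))
    (V : Finset (EuclideanSpace ℝ (Fin d)))
    (S : Fin m → EuclideanSpace ℝ (Fin d) → EuclideanSpace ℝ (Fin d))
    (hP : IsPolyhedronWithVertices P V)
    (hS : IsPPolyhedralSystem P V S) :
    (∀ i : Fin m, ∀ x ∈ P, S i x ∈ (V : Set (EuclideanSpace ℝ (Fin d))) →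
      x ∈ (V : Set (EuclideanSpace ℝ (Fin d)))) ∧
    (∀ i : Fin m, S i '' P ∩ (V : Set (EuclideanSpace ℝ (Fin d))) ⊆
      S i '' (V : Set (EuclideanSpace ℝ (Fin d)))) := by
  obtain ⟨hr, hsub, hint, hcov⟩ := hS
  have hinj : ∀ i : Fin m, Function.Injective (S i) := by
    intro i x y hxy
    obtain ⟨r, hr01, hd⟩ := hr i
    have := hd x y
    rw [hxy, dist_self] at this
    have : dist x y = 0 := by
      rcases mul_eq_zero.mp this.symm with h | h
      · exact absurd h (ne_of_gt hr01.1)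
      · exact h
    exact dist_eq_zero.mp this
  have key : ∀ i : Fin m, ∀ x ∈ P, S i x ∈ (V : Set (EuclideanSpace ℝ (Fin d))) →
      x ∈ (V : Set (EuclideanSpace ℝ (Fin d))) := by
    intro i x hx hv
    obtain ⟨_, hVP, _⟩ := hP
    obtain ⟨_, ⟨j, rfl⟩, u, hu, huv⟩ := hcov hv
    by_cases hij : i = j
    · subst hij
      have := hinj i huv.symm
      rwa [← this] at hu
    · rcases hint i j hij with h | ⟨w, hw, hwi, hwj⟩
      · exfalso
        have : S i x ∈ S i '' P ∩ S j '' P :=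
          ⟨⟨x, hx, rfl⟩, ⟨u, hVP hu, huv⟩⟩
        rw [h] at this
        exact this
      · have hmem : S i x ∈ S i '' P ∩ S j '' P :=
          ⟨⟨x, hx, rfl⟩, ⟨u, hVP hu, huv⟩⟩
        rw [hw] at hmem
        rw [Set.mem_singleton_iff] at hmem
        rw [← hmem] at hwi
        obtain ⟨u', hu', huv'⟩ := hwi
        exact hinj i huv' ▸ hu'
  refine ⟨key, ?_⟩
  rintro i z ⟨⟨x, hx, rfl⟩, hv⟩
  exact ⟨x, key i x hx hv, rfl⟩
end

section
/- Let S be a P-polyhedral system with attractor K and index map π : I^∞ → K defined by π(α) = ⋂_{n≥1} K_{α_1...α_n}. If x ∈ K does not belong to G_S(V_P) = ⋃_{j ∈ I*} S_j(V_P), then x has exactly one address: #π⁻¹(x) = 1. -/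
open Set

lemma Sw_nil {d : ℕ} {ι : Type*} (S : ι → EuclideanSpace ℝ (Fin d) → EuclideanSpace ℝ (Fin d)) :
    Sw S [] = id := rfl

lemma Sw_cons {d : ℕ} {ι : Type*} (S : ι → EuclideanSpace ℝ (Fin d) → EuclideanSpace ℝ (Fin d))
    (i : ι) (l : List ι) : Sw S (i :: l) = S i ∘ Sw S l := rfl

lemma Sw_append {d : ℕ} {ι : Type*} (S : ι → EuclideanSpace ℝ (Fin d) → EuclideanSpace ℝ (Fin d))
    (l₁ l₂ : List ι) : Sw S (l₁ ++ l₂) = Sw S l₁ ∘ Sw S l₂ := by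
  induction l₁ with
  | nil => rfl
  | cons i l ih => simp [Sw_cons, List.cons_append, ih, Function.comp_assoc]

/-- For a `P`-polyhedral system with attractor `K`, a point of `K` not belonging to any
vertex of any `P_j` has exactly one address: there is exactly one sequence `α` with
`x ∈ ⋂ₙ S_{α₁…αₙ}(K)`. -/
theorem stmt_11 {d m : ℕ} (P : Set (EuclideanSpace ℝ (Fin d)))
    (V : Finset (EuclideanSpace ℝ (Fin d)))
    (S : Fin m → EuclideanSpace ℝ (Fin d) → EuclideanSpace ℝ (Fin d))
    (hP : IsPolyhedronWithVertices P V)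
    (hS : IsPPolyhedralSystem P V S)
    (K : Set (EuclideanSpace ℝ (Fin d))) (hKne : K.Nonempty) (hKc : IsCompact K)
    (hKinv : K = ⋃ i, S i '' K)
    (x : EuclideanSpace ℝ (Fin d)) (hx : x ∈ K)
    (hxv : x ∉ ⋃ j : List (Fin m), Sw S j '' (V : Set (EuclideanSpace ℝ (Fin d)))) :
    ∃! α : ℕ → Fin m,
      x ∈ ⋂ n : ℕ, Sw S (List.ofFn fun k : Fin n => α k) '' K := by
  classical
  obtain ⟨hPc, hVP, ⟨e⟩⟩ := hP
  obtain ⟨hsim, hSP, hdisj, -⟩ := hS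
  -- each S i is injective
  have hinjS : ∀ i, Function.Injective (S i) := by
    intro i a b hab
    obtain ⟨r, ⟨hr0, hr1⟩, hdist⟩ := hsim i
    have : r * dist a b = 0 := by rw [← hdist, hab, dist_self]
    have : dist a b = 0 := by
      rcases mul_eq_zero.1 this with h | h
      · exact absurd h (ne_of_gt hr0)
      · exact h
    exact dist_eq_zero.1 this
  have hinjSw : ∀ l : List (Fin m), Function.Injective (Sw S l) := by
    intro l
    induction l with
    | nil => exact fun a b h => h
    | cons i l ih => rw [Sw_cons]; exact (hinjS i).comp ih
  -- P is nonempty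
  have hPne : P.Nonempty := by
    refine ⟨(e.symm ⟨0, by simp⟩ : P).1, (e.symm ⟨0, by simp⟩ : P).2⟩
  -- K ⊆ P
  have hKP : K ⊆ P := by
    have hcont : ContinuousOn (fun y => Metric.infDist y P) K :=
      (Metric.continuous_infDist_pt P).continuousOn
    obtain ⟨x₀, hx₀K, hmax⟩ := hKc.exists_isMaxOn hKne hcont
    set M := Metric.infDist x₀ P with hM
    have hM0 : M ≤ 0 := by
      by_contra hM0
      push_neg at hM0
      have hx₀' : x₀ ∈ ⋃ i, S i '' K := hKinv ▸ hx₀K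
      obtain ⟨i, y, hyK, hy⟩ := by
        simpa using hx₀'
      obtain ⟨r, ⟨hr0, hr1⟩, hdist⟩ := hsim i
      obtain ⟨p, hpP, hpd⟩ := hPc.exists_infDist_eq_dist hPne y
      have hSp : S i p ∈ P := hSP i ⟨p, hpP, rfl⟩
      have h1 : M ≤ dist x₀ (S i p) := Metric.infDist_le_dist_of_mem hSp
      have h2 : dist x₀ (S i p) = r * dist y p := by rw [← hy]; exact hdist y p
      have h3 : Metric.infDist y P ≤ M := hmax hyK
      have : M ≤ r * M := by
        calc M ≤ r * dist y p := h2 ▸ h1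
        _ = r * Metric.infDist y P := by rw [hpd]
        _ ≤ r * M := by nlinarith
      nlinarith
    have hMem : ∀ z ∈ K, z ∈ P := by
      intro z hzK
      have : Metric.infDist z P ≤ M := hmax hzK
      have h0 : Metric.infDist z P = 0 :=
        le_antisymm (this.trans hM0) Metric.infDist_nonneg
      exact (hPc.isClosed.mem_iff_infDist_zero hPne).2 h0
    exact hMem
  -- construct a coding sequence
  have hstep : ∀ p, p ∈ K → ∃ i : Fin m, ∃ y, y ∈ K ∧ S i y = p := by
    intro p hp
    have : p ∈ ⋃ i, S i '' K := hKinv ▸ hp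
    simpa [eq_comm] using this
  choose idx pt hptK hpt using hstep
  let seq : ℕ → {p : EuclideanSpace ℝ (Fin d) // p ∈ K} := fun n =>
    Nat.rec ⟨x, hx⟩ (fun _ p => ⟨pt p.1 p.2, hptK p.1 p.2⟩) n
  let α : ℕ → Fin m := fun n => idx (seq n).1 (seq n).2
  have hkey : ∀ n, S (α n) (seq (n + 1)).1 = (seq n).1 := fun n => hpt (seq n).1 (seq n).2
  have hofn : ∀ (β : ℕ → Fin m) (n : ℕ),
      (List.ofFn fun k : Fin (n + 1) => β k) =
        (List.ofFn fun k : Fin n => β k) ++ [β n] := by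
    intro β n
    rw [List.ofFn_succ']
    simp [List.concat_eq_append]
  have hcode : ∀ n, Sw S (List.ofFn fun k : Fin n => α k) (seq n).1 = x := by
    intro n
    induction n with
    | zero => rfl
    | succ n ih =>
        rw [hofn α n, Sw_append]
        have : Sw S [α n] (seq (n + 1)).1 = (seq n).1 := by
          simpa [Sw_cons, Sw_nil] using hkey n
        simp only [Function.comp_apply, this, ih]
  have hxcode : x ∈ ⋂ n : ℕ, Sw S (List.ofFn fun k : Fin n => α k) '' K := by
    refine mem_iInter.2 fun n => ⟨(seq n).1, (seq n).2, hcode n⟩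
  -- uniqueness
  have huniq : ∀ β γ : ℕ → Fin m,
      x ∈ (⋂ n : ℕ, Sw S (List.ofFn fun k : Fin n => β k) '' K) →
      x ∈ (⋂ n : ℕ, Sw S (List.ofFn fun k : Fin n => γ k) '' K) → β = γ := by
    intro β γ hβ hγ
    by_contra hne
    have hex : ∃ n, β n ≠ γ n := Function.ne_iff.1 hne
    set n := Nat.find hex with hn
    have hdn : β n ≠ γ n := Nat.find_spec hex
    have hmin : ∀ k < n, β k = γ k := fun k hk => by
      by_contra h; exact absurd (Nat.find_le h) (not_le.2 hk)
    have hpre : (List.ofFn fun k : Fin n => β k) = (List.ofFn fun k : Fin n => γ k) := by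
      rw [List.ofFn_inj]
      funext k
      exact hmin k k.2
    obtain ⟨a, haK, ha⟩ := mem_iInter.1 hβ (n + 1)
    obtain ⟨b, hbK, hb⟩ := mem_iInter.1 hγ (n + 1)
    rw [hofn β n, Sw_append] at ha
    rw [hofn γ n, Sw_append, ← hpre] at hb
    simp only [Function.comp_apply, Sw_cons, Sw_nil, id_eq] at ha hb
    have heq : S (β n) a = S (γ n) b :=
      hinjSw (List.ofFn fun k : Fin n => β k) (ha.trans hb.symm)
    -- the common point lies in S (β n) '' P ∩ S (γ n) '' P
    have hmemi : S (β n) a ∈ S (β n) '' P ∩ S (γ n) '' P :=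
      ⟨⟨a, hKP haK, rfl⟩, ⟨b, hKP hbK, heq.symm⟩⟩
    rcases hdisj (β n) (γ n) hdn with hempty | ⟨v, hv, hvi, _⟩
    · rw [hempty] at hmemi; exact hmemi
    · have hveq : S (β n) a = v := by
        have := hv ▸ hmemi
        simpa using this
      obtain ⟨u, huV, hu⟩ := hvi
      apply hxv
      refine mem_iUnion.2 ⟨(List.ofFn fun k : Fin n => β k) ++ [β n], u, huV, ?_⟩
      rw [Sw_append]
      show Sw S (List.ofFn fun k : Fin n => β k) (S (β n) (id u)) = x
      rw [id_eq, hu, ← hveq]; exact ha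
  exact ⟨α, hxcode, fun β hβ => huniq β α hβ hxcode⟩
end

section
/- Let S be a contractible P-polyhedral system with attractor K, and let j ∈ I* be a multiindex. For any continuum (compact connected set) L ⊆ K meeting both P_j and the exterior of P_j, the set closure(L \ P_j) ∩ P_j is contained in S_j(V_P), the vertex set of the polyhedron P_j. -/
/-!
Since `K` is invariant and the maps send `P` into `P`, `K ⊆ P`, so `K` is covered by the
cells `P_w` with `|w| = |j|`. Points of `L` outside `P_j` therefore lie in the finitely many
other cells of the same level, and so does the closure of `L \ P_j`. Two distinct cells of the
same level meet only in vertices of both: peel off the common prefix of the two words, and at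
the first differing letter the first-level cells meet in a vertex, which the remaining maps
carry to vertices because every vertex of `P` is a vertex of each first-level cell containing it.
-/

open Set

open Metric

section ContractionInvariant

variable {α ι : Type*} [MetricSpace α]

lemma injective_of_dist_eq_mul {f : α → α} {r : ℝ} (hr : 0 < r)
    (hf : ∀ x y, dist (f x) (f y) = r * dist x y) : Function.Injective f := fun x y hxy => by
  have h := hf x y
  rw [hxy, dist_self, eq_comm, mul_eq_zero] at h
  exact dist_eq_zero.mp (h.resolve_left hr.ne')

lemma infDist_apply_le_mul {P : Set α} (hPc : IsCompact P) (hPne : P.Nonempty) {f : α → α}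
    (hfP : f '' P ⊆ P) {r : ℝ} (hf : ∀ x y, dist (f x) (f y) ≤ r * dist x y) (y : α) :
    infDist (f y) P ≤ r * infDist y P := by
  obtain ⟨p, hp, hyp⟩ := hPc.exists_infDist_eq_dist hPne y
  calc infDist (f y) P ≤ dist (f y) (f p) := infDist_le_dist_of_mem (hfP (mem_image_of_mem f hp))
    _ ≤ r * infDist y P := hyp ▸ hf y p

/-- The point of `K` farthest from `P` is the image of a point of `K`, which is at least as far
from `P`, so contraction forces that distance to vanish. -/
lemma subset_of_subset_iUnion_image {f : ι → α → α} {K P : Set α} (hKc : IsCompact K)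
    (hK : K ⊆ ⋃ i, f i '' K) (hPc : IsCompact P) (hPne : P.Nonempty) (hfP : ∀ i, f i '' P ⊆ P)
    (hf : ∀ i, ∃ r < 1, ∀ x y, dist (f i x) (f i y) ≤ r * dist x y) : K ⊆ P := by
  intro x hxK
  by_contra hxP
  obtain ⟨x₀, hx₀K, hmax⟩ :=
    hKc.exists_isMaxOn ⟨x, hxK⟩ (continuous_infDist_pt P).continuousOn
  obtain ⟨i, y, hyK, rfl⟩ := mem_iUnion.mp (hK hx₀K)
  obtain ⟨r, hr1, hr⟩ := hf i
  have hpos : 0 < infDist x P := (hPc.isClosed.notMem_iff_infDist_pos hPne).mp hxP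
  have hx : infDist x P ≤ infDist (f i y) P := hmax hxK
  have hy : infDist y P ≤ infDist (f i y) P := hmax hyK
  have hfy := infDist_apply_le_mul hPc hPne (hfP i) hr y
  rcases le_or_gt 0 r with hr0 | hr0
  · nlinarith [mul_le_mul_of_nonneg_left hy hr0]
  · nlinarith [infDist_nonneg (x := y) (s := P)]

end ContractionInvariant

section Cells

variable {d : ℕ} {ι : Type*} {P : Set (EuclideanSpace ℝ (Fin d))}
  {V : Finset (EuclideanSpace ℝ (Fin d))}
  {S : ι → EuclideanSpace ℝ (Fin d) → EuclideanSpace ℝ (Fin d)}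

@[simp]
lemma Sw_nil_s14 : Sw S [] = id := rfl

@[simp]
lemma Sw_cons_s14 (a : ι) (w : List ι) : Sw S (a :: w) = S a ∘ Sw S w := rfl

lemma Sw_cons_image (a : ι) (w : List ι) (s : Set (EuclideanSpace ℝ (Fin d))) :
    Sw S (a :: w) '' s = S a '' (Sw S w '' s) := by
  rw [Sw_cons_s14, image_comp]

namespace IsPPolyhedralSystem

variable (hS : IsPPolyhedralSystem P V S)
include hS

lemma injective_s14 (i : ι) : Function.Injective (S i) := by
  obtain ⟨r, ⟨hr0, -⟩, hr⟩ := hS.1 i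
  exact injective_of_dist_eq_mul hr0 hr

lemma exists_dist_le_mul (i : ι) : ∃ r < 1, ∀ x y, dist (S i x) (S i y) ≤ r * dist x y := by
  obtain ⟨r, ⟨-, hr1⟩, hr⟩ := hS.1 i
  exact ⟨r, hr1, fun x y => (hr x y).le⟩

lemma continuous (i : ι) : Continuous (S i) := by
  obtain ⟨r, -, hr⟩ := hS.exists_dist_le_mul i
  exact (LipschitzWith.of_dist_le' hr).continuous

lemma Sw_continuous (w : List ι) : Continuous (Sw S w) := by
  induction w with
  | nil => exact continuous_id
  | cons a w ih => exact (hS.continuous a).comp ih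

lemma Sw_image_subset (w : List ι) : Sw S w '' P ⊆ P := by
  induction w with
  | nil => simp
  | cons a w ih => rw [Sw_cons_image]; exact (image_mono ih).trans (hS.2.1 a)

lemma image_inter_image_subset_vertices {i k : ι} (hik : i ≠ k) :
    S i '' P ∩ S k '' P ⊆ S i '' ↑V := by
  intro x hx
  rcases hS.2.2.1 i k hik with h | ⟨v, hv, hvi, -⟩
  · exact absurd (h ▸ hx) (notMem_empty x)
  · rw [hv] at hx
    exact hx ▸ hvi

lemma vertices_inter_image_subset (hVP : ↑V ⊆ P) (a : ι) : ↑V ∩ S a '' P ⊆ S a '' ↑V := by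
  rintro u ⟨huV, hua⟩
  obtain ⟨i, hui⟩ := mem_iUnion.mp (hS.2.2.2 huV)
  by_cases hia : i = a
  · exact hia ▸ hui
  · exact hS.image_inter_image_subset_vertices (Ne.symm hia) ⟨hua, image_mono hVP hui⟩

lemma vertices_inter_Sw_image_subset (hVP : ↑V ⊆ P) (w : List ι) :
    ↑V ∩ Sw S w '' P ⊆ Sw S w '' ↑V := by
  induction w with
  | nil => simp
  | cons a w ih =>
    rintro u ⟨huV, hu⟩
    rw [Sw_cons_image] at hu ⊢
    have huV' : u ∈ S a '' ↑V :=
      hS.vertices_inter_image_subset hVP a ⟨huV, image_mono (hS.Sw_image_subset w) hu⟩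
    have hu' : u ∈ S a '' (↑V ∩ Sw S w '' P) := by
      rw [image_inter (hS.injective_s14 a)]; exact ⟨huV', hu⟩
    exact image_mono ih hu'

lemma Sw_image_inter_Sw_image_subset_vertices (hVP : ↑V ⊆ P) {j w : List ι}
    (hlen : j.length = w.length) (hjw : j ≠ w) : Sw S j '' P ∩ Sw S w '' P ⊆ Sw S j '' ↑V := by
  induction j generalizing w with
  | nil => exact absurd (List.length_eq_zero_iff.mp hlen.symm).symm hjw
  | cons a j ih =>
    obtain _ | ⟨b, w⟩ := w
    · simp at hlen
    rw [Sw_cons_image, Sw_cons_image, Sw_cons_image]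
    by_cases hab : a = b
    · subst hab
      rw [← image_inter (hS.injective_s14 a)]
      exact image_mono (ih (by simpa using hlen) (fun h => hjw (h ▸ rfl)))
    · rintro x ⟨hxa, hxb⟩
      have hxV : x ∈ S a '' ↑V := hS.image_inter_image_subset_vertices hab
        ⟨image_mono (hS.Sw_image_subset j) hxa, image_mono (hS.Sw_image_subset w) hxb⟩
      have hx : x ∈ S a '' (↑V ∩ Sw S j '' P) := by
        rw [image_inter (hS.injective_s14 a)]; exact ⟨hxV, hxa⟩
      exact image_mono (hS.vertices_inter_Sw_image_subset hVP j) hx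

end IsPPolyhedralSystem

lemma exists_length_eq_mem_Sw_image {K : Set (EuclideanSpace ℝ (Fin d))} (hK : K ⊆ ⋃ i, S i '' K)
    (n : ℕ) {x : EuclideanSpace ℝ (Fin d)} (hx : x ∈ K) :
    ∃ w : List ι, w.length = n ∧ x ∈ Sw S w '' K := by
  induction n generalizing x with
  | zero => exact ⟨[], rfl, by simpa using hx⟩
  | succ n ih =>
    obtain ⟨i, y, hy, rfl⟩ := mem_iUnion.mp (hK hx)
    obtain ⟨w, hw, hyw⟩ := ih hy
    exact ⟨i :: w, by simp [hw], by rw [Sw_cons_image]; exact mem_image_of_mem _ hyw⟩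

lemma closure_diff_Sw_image_inter_subset_vertices [Finite ι] (hS : IsPPolyhedralSystem P V S)
    (hPc : IsCompact P) (hVP : ↑V ⊆ P) {K : Set (EuclideanSpace ℝ (Fin d))} (hKP : K ⊆ P)
    (hK : K ⊆ ⋃ i, S i '' K) (j : List ι) :
    closure (K \ Sw S j '' P) ∩ Sw S j '' P ⊆ Sw S j '' ↑V := by
  set W := {w : List ι | w.length = j.length ∧ w ≠ j}
  have hWc : IsClosed (⋃ w ∈ W, Sw S w '' P) :=
    ((List.finite_length_eq ι j.length).subset fun _ hw => hw.1).isClosed_biUnion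
      fun w _ => (hPc.image (hS.Sw_continuous w)).isClosed
  have hcover : K \ Sw S j '' P ⊆ ⋃ w ∈ W, Sw S w '' P := by
    rintro y ⟨hyK, hyj⟩
    obtain ⟨w, hw, hyw⟩ := exists_length_eq_mem_Sw_image hK j.length hyK
    have hyw' : y ∈ Sw S w '' P := image_mono hKP hyw
    exact mem_biUnion ⟨hw, fun h => hyj (h ▸ hyw')⟩ hyw'
  rintro x ⟨hxK, hxj⟩
  obtain ⟨w, ⟨hw, hwj⟩, hxw⟩ := mem_iUnion₂.mp (hWc.closure_subset_iff.mpr hcover hxK)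
  exact hS.Sw_image_inter_Sw_image_subset_vertices hVP hw.symm (Ne.symm hwj) ⟨hxj, hxw⟩

end Cells

theorem stmt_14_general {d m : ℕ} (P : Set (EuclideanSpace ℝ (Fin d)))
    (V : Finset (EuclideanSpace ℝ (Fin d)))
    (S : Fin m → EuclideanSpace ℝ (Fin d) → EuclideanSpace ℝ (Fin d))
    (hP : IsPolyhedronWithVertices P V)
    (hS : IsPPolyhedralSystem P V S)
    (K : Set (EuclideanSpace ℝ (Fin d))) (hKc : IsCompact K)
    (hKinv : K = ⋃ i, S i '' K)
    (j : List (Fin m))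
    (L : Set (EuclideanSpace ℝ (Fin d))) (hLK : L ⊆ K) :
    closure (L \ Sw S j '' P) ∩ Sw S j '' P ⊆
      Sw S j '' (V : Set (EuclideanSpace ℝ (Fin d))) := by
  obtain ⟨hPc, hVP, -⟩ := hP
  rintro x ⟨hxL, hxj⟩
  have hKP : K ⊆ P := subset_of_subset_iUnion_image hKc hKinv.le hPc
    ⟨_, hS.Sw_image_subset j hxj⟩ hS.2.1 hS.exists_dist_le_mul
  exact closure_diff_Sw_image_inter_subset_vertices hS hPc hVP hKP hKinv.le j
    ⟨closure_mono (sdiff_subset_sdiff_left hLK) hxL, hxj⟩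

/-- A subcontinuum `L ⊆ K` meeting both `P_j` and the exterior of `P_j` can enter `P_j`
only through the vertices of `P_j`. -/
theorem stmt_14 {d m : ℕ} (P : Set (EuclideanSpace ℝ (Fin d)))
    (V : Finset (EuclideanSpace ℝ (Fin d)))
    (S : Fin m → EuclideanSpace ℝ (Fin d) → EuclideanSpace ℝ (Fin d))
    (hP : IsPolyhedronWithVertices P V)
    (hS : IsPPolyhedralSystem P V S)
    (hcontr : ContractibleSpace ↥(⋃ i, S i '' P))
    (K : Set (EuclideanSpace ℝ (Fin d))) (hKne : K.Nonempty) (hKc : IsCompact K)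
    (hKinv : K = ⋃ i, S i '' K)
    (j : List (Fin m))
    (L : Set (EuclideanSpace ℝ (Fin d))) (hLK : L ⊆ K)
    (hLc : IsCompact L) (hLconn : IsConnected L)
    (hL1 : (L ∩ Sw S j '' P).Nonempty)
    (hL2 : (L ∩ interior (Sw S j '' P)ᶜ).Nonempty) :
    closure (L \ Sw S j '' P) ∩ Sw S j '' P ⊆
      Sw S j '' (V : Set (EuclideanSpace ℝ (Fin d))) :=
  stmt_14_general P V S hP hS K hKc hKinv j L hLK
end
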